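/- Let U ⊆ ℝ² be open and let u : U → ℝ be smooth. Define H : U → ℝ by H(t,x) := u(t,x) + x·(u_x(t,x) − u_t(t,x)). Then u satisfies the second-order PDE −x²u_t² + 2x²u_t u_x − x²u_x² + 2xu·u_t − 2xu·u_x − x·u_{tt} + x·u_{tx} − u² + u_t = 0 on U if and only if H satisfies ∂H/∂t = H² on U. -/

import Mathlib

open Real

/-- Partial derivative of a function of two real variables w.r.t. its first argument. -/
noncomputable def d1 (f : ℝ → ℝ → ℝ) (a b : ℝ) : ℝ := deriv (fun s => f s b) a

/-- Partial derivative of a function of two real variables w.r.t. its second argument. -/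
noncomputable def d2 (f : ℝ → ℝ → ℝ) (a b : ℝ) : ℝ := deriv (fun s => f a s) b

/-- A function of two real variables is smooth (infinitely differentiable). -/
def Smooth2 (f : ℝ → ℝ → ℝ) : Prop := ContDiff ℝ (⊤ : ℕ∞) (fun p : ℝ × ℝ => f p.1 p.2)

/-- A function of two real variables is smooth on a set `U ⊆ ℝ²`. -/
def Smooth2On (f : ℝ → ℝ → ℝ) (U : Set (ℝ × ℝ)) : Prop :=
  ContDiffOn ℝ (⊤ : ℕ∞) (fun p : ℝ × ℝ => f p.1 p.2) U

section Partials

variable {u : ℝ → ℝ → ℝ} {U : Set (ℝ × ℝ)} {p : ℝ × ℝ}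

theorem hasDerivAt_slice_fst (hu : DifferentiableAt ℝ (fun q : ℝ × ℝ => u q.1 q.2) p) :
    HasDerivAt (fun s => u s p.2) (fderiv ℝ (fun q : ℝ × ℝ => u q.1 q.2) p (1, 0)) p.1 :=
  hu.hasFDerivAt.comp_hasDerivAt (f := fun s : ℝ => (s, p.2)) p.1
    ((hasDerivAt_id p.1).prodMk (hasDerivAt_const p.1 p.2))

theorem hasDerivAt_slice_snd (hu : DifferentiableAt ℝ (fun q : ℝ × ℝ => u q.1 q.2) p) :
    HasDerivAt (fun s => u p.1 s) (fderiv ℝ (fun q : ℝ × ℝ => u q.1 q.2) p (0, 1)) p.2 :=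
  hu.hasFDerivAt.comp_hasDerivAt (f := fun s : ℝ => (p.1, s)) p.2
    ((hasDerivAt_const p.2 p.1).prodMk (hasDerivAt_id p.2))

theorem Smooth2On.differentiableAt (hU : IsOpen U) (hu : Smooth2On u U) (hp : p ∈ U) :
    DifferentiableAt ℝ (fun q : ℝ × ℝ => u q.1 q.2) p :=
  (hu.contDiffAt (hU.mem_nhds hp)).differentiableAt (by simp)

theorem Smooth2On.differentiableAt_slice_fst (hU : IsOpen U) (hu : Smooth2On u U)
    (hp : p ∈ U) : DifferentiableAt ℝ (fun s => u s p.2) p.1 :=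
  (hasDerivAt_slice_fst (hu.differentiableAt hU hp)).differentiableAt

theorem Smooth2On.fderiv_apply (hU : IsOpen U) (hu : Smooth2On u U) (v : ℝ × ℝ) :
    ContDiffOn ℝ (⊤ : ℕ∞) (fun q => fderiv ℝ (fun q : ℝ × ℝ => u q.1 q.2) q v) U :=
  (hu.fderiv_of_isOpen (m := (⊤ : ℕ∞)) hU (by exact_mod_cast le_top)).clm_apply contDiffOn_const

theorem Smooth2On.d1 (hU : IsOpen U) (hu : Smooth2On u U) : Smooth2On (d1 u) U :=
  (hu.fderiv_apply hU (1, 0)).congr fun _ hq =>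
    (hasDerivAt_slice_fst (hu.differentiableAt hU hq)).deriv

theorem Smooth2On.d2 (hU : IsOpen U) (hu : Smooth2On u U) : Smooth2On (d2 u) U :=
  (hu.fderiv_apply hU (0, 1)).congr fun _ hq =>
    (hasDerivAt_slice_snd (hu.differentiableAt hU hq)).deriv

end Partials

theorem d1_add_mul_sub {u v w : ℝ → ℝ → ℝ} {t x : ℝ}
    (hu : DifferentiableAt ℝ (fun s => u s x) t) (hv : DifferentiableAt ℝ (fun s => v s x) t)
    (hw : DifferentiableAt ℝ (fun s => w s x) t) :
    d1 (fun t x => u t x + x * (v t x - w t x)) t x = d1 u t x + x * (d1 v t x - d1 w t x) :=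
  (hu.hasDerivAt.add ((hv.hasDerivAt.sub hw.hasDerivAt).const_mul x)).deriv

/-- The complicated second-order PDE
`−x²u_t² + 2x²u_tu_x − x²u_x² + 2xuu_t − 2xuu_x − xu_{tt} + xu_{tx} − u² + u_t = 0`
holds on `U` iff the invariant `H = u + x(u_x − u_t)` satisfies `H_t = H²` on `U`. -/
theorem complicated_pde_iff_H_riccati
    (U : Set (ℝ × ℝ)) (hU : IsOpen U)
    (u : ℝ → ℝ → ℝ) (hu : Smooth2On u U)
    (H : ℝ → ℝ → ℝ)
    (hH : ∀ t x : ℝ, H t x = u t x + x * (d2 u t x - d1 u t x)) :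
    (∀ p ∈ U,
      -p.2^2 * (d1 u p.1 p.2)^2 + 2 * p.2^2 * d1 u p.1 p.2 * d2 u p.1 p.2
        - p.2^2 * (d2 u p.1 p.2)^2 + 2 * p.2 * u p.1 p.2 * d1 u p.1 p.2
        - 2 * p.2 * u p.1 p.2 * d2 u p.1 p.2 - p.2 * d1 (d1 u) p.1 p.2
        + p.2 * d1 (d2 u) p.1 p.2 - (u p.1 p.2)^2 + d1 u p.1 p.2 = 0) ↔
    (∀ p ∈ U, d1 H p.1 p.2 = (H p.1 p.2)^2) := by
  obtain rfl : H = fun t x => u t x + x * (d2 u t x - d1 u t x) := funext₂ hH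
  refine forall₂_congr fun p hp => ?_
  have hH_t : d1 (fun t x => u t x + x * (d2 u t x - d1 u t x)) p.1 p.2 =
      d1 u p.1 p.2 + p.2 * (d1 (d2 u) p.1 p.2 - d1 (d1 u) p.1 p.2) :=
    d1_add_mul_sub (hu.differentiableAt_slice_fst hU hp)
      ((hu.d2 hU).differentiableAt_slice_fst hU hp) ((hu.d1 hU).differentiableAt_slice_fst hU hp)
  -- expanding `H²`, the left-hand side of the PDE is exactly `H_t - H²`
  rw [hH_t, ← sub_eq_zero (a := d1 u p.1 p.2 + _)]
  constructor <;> intro h <;> linear_combination h
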